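/- It is NOT the case that C(a,b) ≤ C(a) + K(b|a) + O(1): for every constant c there exist binary strings a, b with C(a,b) > C(a) + K(b|a) + c. In fact, there is a constant c₀ such that for infinitely many pairs (x,y) of binary strings, C(x,y) ≥ C(x) + K(y|x) + log₂ n − 2·log₂ log₂ n − c₀, where n = |x| + |y| is the total length. -/

import Mathlib

/-- Binary strings. -/
abbrev BinStr := List Bool

/-- Standard encoding of a binary string as a natural number. -/
def enc (a : BinStr) : ℕ := Encodable.encode a

/-- A (conditional) machine: it takes a program (a binary string) and a condition
(a natural number, which encodes the conditioning data: a number, a string via `enc`,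
or a tuple combined with the standard pairing `Nat.pair`) and possibly outputs a
natural number (encoding the result in the same way). -/
abbrev Machine := BinStr → ℕ →. ℕ

/-- Conditional Kolmogorov complexity of `x` given condition `y`, with respect to the
machine `U`: the minimal length of a program `p` such that `U p y = x`. -/
noncomputable def cplx (U : Machine) (x y : ℕ) : ℕ :=
  sInf {n | ∃ p : BinStr, p.length = n ∧ x ∈ U p y}

/-- Unconditional Kolmogorov complexity: conditional complexity with the trivial
condition `0`. -/
noncomputable def cplx0 (U : Machine) (x : ℕ) : ℕ := cplx U x 0

/-- `U` is an optimal universal machine for plain complexity: it is partial computable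
and simulates every partial computable machine with at most a constant overhead in
program length. -/
def IsOptimal (U : Machine) : Prop :=
  Partrec₂ U ∧
    ∀ V : Machine, Partrec₂ V →
      ∃ c : ℕ, ∀ (p : BinStr) (y x : ℕ), x ∈ V p y →
        ∃ q : BinStr, q.length ≤ p.length + c ∧ x ∈ U q y

/-- A machine is prefix-free if, for every condition, the set of its halting programs
is prefix-free: no halting program is a proper prefix of another halting program. -/
def PrefixFreeMachine (M : Machine) : Prop :=
  ∀ (y : ℕ) (p q : BinStr), p <+: q → (M p y).Dom → (M q y).Dom → p = q

/-- `U` is an optimal universal prefix-free machine: it is partial computable,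
prefix-free, and simulates every partial computable prefix-free machine with at most
a constant overhead in program length. -/
def IsPrefixOptimal (U : Machine) : Prop :=
  Partrec₂ U ∧ PrefixFreeMachine U ∧
    ∀ V : Machine, Partrec₂ V → PrefixFreeMachine V →
      ∃ c : ℕ, ∀ (p : BinStr) (y x : ℕ), x ∈ V p y →
        ∃ q : BinStr, q.length ≤ p.length + c ∧ x ∈ U q y

/-! Take `n = 2 ^ (k + 1)`. Among the `2 ^ n * 2 ^ k` pairs `(z, m)` with `|z| = n` and
`2 ^ k < m ≤ n`, some pair has `C(z, m) ≥ n + k`. Cut `z = a ++ b` after `m` bits. Then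
`C(a) ≤ m + O(1)`. Since `|b| < |a|` and `|a| + |b|` is a power of two, `|a|` determines `|b|`,
so given `a` the string `b` is its own prefix-free description and `K(b|a) ≤ n - m + O(1)`.
Finally `(z, m)` is computable from `(a, b)`, so `C(a, b) ≥ n + k - O(1)`, which exceeds
`C(a) + K(b|a)` by `k - O(1) = log₂ n - O(1)`. -/

open Encodable Finset

def listsOfLength (α : Type*) [Fintype α] (n : ℕ) : Finset (List α) :=
  (univ : Finset (List.Vector α n)).map ⟨List.Vector.toList, List.Vector.toList_injective⟩

section Counting

variable {α : Type*} [Fintype α]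

@[simp] lemma mem_listsOfLength {n : ℕ} {p : List α} : p ∈ listsOfLength α n ↔ p.length = n :=
  ⟨fun h => by obtain ⟨v, -, rfl⟩ := mem_map.1 h; exact v.toList_length,
    fun h => mem_map.2 ⟨⟨p, h⟩, mem_univ _, rfl⟩⟩

@[simp] lemma card_listsOfLength (n : ℕ) : #(listsOfLength α n) = Fintype.card α ^ n := by
  simp [listsOfLength]

lemma card_lt_pow_of_length_lt (hα : 2 ≤ Fintype.card α) {P : Finset (List α)} {L : ℕ}
    (hP : ∀ p ∈ P, p.length < L) : #P < Fintype.card α ^ L := by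
  classical
  have hfiber (k : ℕ) : #{p ∈ P | p.length = k} ≤ Fintype.card α ^ k :=
    card_listsOfLength (α := α) k ▸
      card_le_card fun p hp => mem_listsOfLength.2 (mem_filter.1 hp).2
  calc #P = ∑ k ∈ range L, #{p ∈ P | p.length = k} :=
        card_eq_sum_card_fiberwise fun p hp => mem_range.2 (hP p hp)
    _ ≤ ∑ k ∈ range L, Fintype.card α ^ k := sum_le_sum fun k _ => hfiber k
    _ < Fintype.card α ^ L := Nat.geomSum_lt hα fun k hk => mem_range.1 hk

end Counting

section Complexity

variable {M U : Machine} {x y : ℕ}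

lemma cplx_le_length {p : BinStr} (h : x ∈ M p y) : cplx M x y ≤ p.length :=
  Nat.sInf_le ⟨p, rfl, h⟩

lemma exists_length_eq_cplx (h : ∃ p, x ∈ M p y) :
    ∃ p : BinStr, p.length = cplx M x y ∧ x ∈ M p y :=
  let ⟨p, hp⟩ := h
  Nat.sInf_mem (s := {n | ∃ p : BinStr, p.length = n ∧ x ∈ M p y}) ⟨p.length, p, rfl, hp⟩

lemma exists_le_cplx_of_two_pow_le_card {S : Finset ℕ} {L : ℕ} (hS : ∀ x ∈ S, ∃ p, x ∈ M p y)
    (hcard : 2 ^ L ≤ #S) : ∃ x ∈ S, L ≤ cplx M x y := by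
  by_contra! hlt
  choose! prog hprog using fun x hx => exists_length_eq_cplx (hS x hx)
  have hinj : Set.InjOn prog S := fun x hx x' hx' he =>
    Part.mem_unique (hprog x hx).2 (he ▸ (hprog x' hx').2)
  have hlen : ∀ p ∈ S.image prog, p.length < L := by
    simp only [mem_image, forall_exists_index, and_imp, forall_apply_eq_imp_iff₂]
    exact fun x hx => (hprog x hx).1 ▸ hlt x hx
  have := card_lt_pow_of_length_lt (by simp) hlen
  rw [card_image_of_injOn hinj, Fintype.card_bool] at this
  omega

lemma exists_cplx_le_of_simulates
    (h : ∃ c, ∀ (p : BinStr) (y x : ℕ), x ∈ M p y →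
      ∃ q : BinStr, q.length ≤ p.length + c ∧ x ∈ U q y) :
    ∃ c, ∀ (p : BinStr) (y x : ℕ), x ∈ M p y → cplx U x y ≤ p.length + c :=
  let ⟨c, hc⟩ := h
  ⟨c, fun p y x hx => let ⟨_, hq, hxq⟩ := hc p y x hx; (cplx_le_length hxq).trans hq⟩

end Complexity

namespace IsOptimal

variable {U : Machine}

lemma exists_cplx_le (hU : IsOptimal U) {M : Machine} (hM : Partrec₂ M) :
    ∃ c, ∀ (p : BinStr) (y x : ℕ), x ∈ M p y → cplx U x y ≤ p.length + c :=
  exists_cplx_le_of_simulates (hU.2 M hM)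

lemma exists_program (hU : IsOptimal U) (x y : ℕ) : ∃ p : BinStr, x ∈ U p y := by
  obtain ⟨c, hc⟩ := hU.2 (fun p _ => Part.some p.length)
    (Computable.partrec (Computable.list_length.comp Computable.fst))
  obtain ⟨q, -, hq⟩ := hc (List.replicate x false) y x (by simp)
  exact ⟨q, hq⟩

lemma exists_cplx_enc_le (hU : IsOptimal U) :
    ∃ c, ∀ (a : BinStr) (y : ℕ), cplx U (enc a) y ≤ a.length + c :=
  let ⟨c, hc⟩ := hU.exists_cplx_le (M := fun p _ => Part.some (enc p))
    (Computable.partrec (Computable.encode.comp Computable.fst))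
  ⟨c, fun a y => hc a y (enc a) (Part.mem_some _)⟩

lemma exists_cplx_encode_comp_le (hU : IsOptimal U) {β γ : Type*} [Primcodable β]
    [Primcodable γ] {g : β → γ} (hg : Computable g) :
    ∃ c, ∀ (b : β) (y : ℕ), cplx U (encode (g b)) y ≤ cplx U (encode b) y + c := by
  set f : ℕ → ℕ := fun w => ((decode w : Option β).map (encode ∘ g)).getD 0
  have hf : Computable f := Computable.option_getD
    (Computable.option_map Computable.decode
      ((Computable.encode.comp hg).comp Computable.snd).to₂)
    (Computable.const 0)
  obtain ⟨c, hc⟩ := hU.exists_cplx_le (M := fun p y => (U p y).map f)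
    (hU.1.map (hf.comp Computable.snd).to₂)
  refine ⟨c, fun b y => ?_⟩
  obtain ⟨p, hp, hbp⟩ := exists_length_eq_cplx (hU.exists_program (encode b) y)
  have hgp : encode (g b) ∈ (U p y).map f := by
    simpa [f, encodek] using Part.mem_map f hbp
  exact hp ▸ hc p y _ hgp

lemma exists_le_cplx_encode (hU : IsOptimal U) {β : Type*} [Encodable β] (T : Finset β)
    {L : ℕ} (hT : 2 ^ L ≤ #T) (y : ℕ) : ∃ b ∈ T, L ≤ cplx U (encode b) y := by
  obtain ⟨x, hx, hL⟩ := exists_le_cplx_of_two_pow_le_card (M := U) (y := y)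
    (S := T.map ⟨encode, encode_injective⟩) (fun x _ => hU.exists_program x y) (by simpa using hT)
  obtain ⟨b, hb, rfl⟩ := mem_map.1 hx
  exact ⟨b, hb, hL⟩

end IsOptimal

def CompletesLength (k m : ℕ) : Prop := k < m ∧ ∃ j < k + m, 2 ^ j = k + m

instance : DecidableRel CompletesLength := fun _ _ => inferInstanceAs (Decidable (_ ∧ _))

lemma CompletesLength.of_two_pow {j m : ℕ} (hm : 2 ^ j < 2 * m) (hmj : m ≤ 2 ^ j) :
    CompletesLength (2 ^ j - m) m :=
  ⟨by omega, j, by have := j.lt_two_pow_self; omega, by omega⟩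

lemma CompletesLength.eq_of_le {k₁ k₂ m : ℕ} (h₁ : CompletesLength k₁ m)
    (h₂ : CompletesLength k₂ m) (hk : k₁ ≤ k₂) : k₁ = k₂ := by
  obtain ⟨-, j₁, -, hj₁⟩ := h₁
  obtain ⟨hk₂, j₂, -, hj₂⟩ := h₂
  -- `2 ^ j₁ ≤ 2 ^ j₂ < 2 * m ≤ 2 ^ (j₁ + 1)`
  have hle : 2 ^ j₁ ≤ 2 ^ j₂ := by omega
  have hlt : 2 ^ j₂ < 2 ^ (j₁ + 1) := by rw [pow_succ]; omega
  obtain rfl : j₁ = j₂ := by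
    have := (pow_le_pow_iff_right₀ one_lt_two).1 hle
    have := (pow_lt_pow_iff_right₀ one_lt_two).1 hlt
    omega
  omega

lemma primrecRel_completesLength : PrimrecRel CompletesLength := by
  have hpow : Primrec fun j : ℕ => 2 ^ j :=
    (Primrec₂.unpaired'.1 Nat.Primrec.pow).comp (Primrec.const 2) Primrec.id
  have hpow_eq : PrimrecRel fun j N : ℕ => 2 ^ j = N :=
    Primrec.eq.comp (hpow.comp Primrec.fst) Primrec.snd
  exact Primrec.nat_lt.and (hpow_eq.exists_lt.comp₂ Primrec.nat_add Primrec.nat_add)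

def completionMachine : Machine := fun p y =>
  Part.ofOption <| (decode y : Option BinStr).bind fun a =>
    if CompletesLength p.length a.length then some (enc p) else none

lemma partrec_completionMachine : Partrec₂ completionMachine := by
  refine Computable.ofOption (Primrec.to_comp ?_)
  refine Primrec.option_bind (Primrec.decode.comp Primrec.snd)
    (Primrec.ite ?_ ?_ (Primrec.const none))
  · exact primrecRel_completesLength.comp
      (Primrec.list_length.comp (Primrec.fst.comp Primrec.fst))
      (Primrec.list_length.comp Primrec.snd)
  · exact Primrec.option_some.comp (Primrec.encode.comp (Primrec.fst.comp Primrec.fst))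

lemma completionMachine_dom {p : BinStr} {y : ℕ} (h : (completionMachine p y).Dom) :
    ∃ a : BinStr, decode y = some a ∧ CompletesLength p.length a.length := by
  simpa [completionMachine, Option.isSome_bind, Option.any_eq_true, apply_ite] using h

lemma prefixFree_completionMachine : PrefixFreeMachine completionMachine := by
  intro y p q hpq hp hq
  obtain ⟨a, ha, hpa⟩ := completionMachine_dom hp
  obtain ⟨a', ha', hqa⟩ := completionMachine_dom hq
  obtain rfl : a = a' := Option.some_injective _ (ha.symm.trans ha')
  exact hpq.eq_of_length (hpa.eq_of_le hqa hpq.length_le)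

lemma enc_mem_completionMachine {a b : BinStr} (h : CompletesLength b.length a.length) :
    enc b ∈ completionMachine b (enc a) := by
  simp [completionMachine, enc, encodek, h]

theorem exists_cplx_pair_gap {U V : Machine} (hU : IsOptimal U) (hV : IsPrefixOptimal V) :
    ∃ c, ∀ k : ℕ, ∃ a b : BinStr, a.length + b.length = 2 ^ (k + 1) ∧
      cplx0 U (enc a) + cplx V (enc b) (enc a) + k ≤ cplx0 U (Nat.pair (enc a) (enc b)) + c := by
  obtain ⟨c₁, hC⟩ := hU.exists_cplx_enc_le
  obtain ⟨c₂, hK⟩ := exists_cplx_le_of_simulates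
    (hV.2.2 _ partrec_completionMachine prefixFree_completionMachine)
  obtain ⟨c₃, hjoin⟩ := hU.exists_cplx_encode_comp_le
    (g := fun ab : BinStr × BinStr => (ab.1 ++ ab.2, ab.1.length))
    ((Computable.list_append.comp Computable.fst Computable.snd).pair
      (Computable.list_length.comp Computable.fst))
  refine ⟨c₁ + c₂ + c₃, fun k => ?_⟩
  set n := 2 ^ (k + 1)
  have hn : n = 2 * 2 ^ k := pow_succ' 2 k
  have hcard : #(listsOfLength Bool n ×ˢ Ioc (2 ^ k) n) = 2 ^ (n + k) := by
    rw [card_product, card_listsOfLength, Nat.card_Ioc, show n - 2 ^ k = 2 ^ k by omega,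
      Fintype.card_bool, pow_add]
  obtain ⟨⟨z, m⟩, hzm, hincomp⟩ := hU.exists_le_cplx_encode _ hcard.ge 0
  simp only [mem_product, mem_listsOfLength, mem_Ioc] at hzm
  obtain ⟨hz, hkm, hmn⟩ := hzm
  set a := z.take m
  set b := z.drop m
  have ha : a.length = m := by simp [a, hz, hmn]
  have hb : b.length = n - m := by simp [b, hz]
  have hCa := hC a 0
  have hKb := hK b (enc a) (enc b) (enc_mem_completionMachine (by
    rw [ha, hb]; exact CompletesLength.of_two_pow (by omega) hmn))
  have hCab : cplx0 U (encode (z, m)) ≤ cplx0 U (Nat.pair (enc a) (enc b)) + c₃ := by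
    have h := hjoin (a, b) 0
    rwa [List.take_append_drop, ha] at h
  refine ⟨a, b, by omega, ?_⟩
  rw [cplx0] at hCab ⊢
  omega

/-- It is not the case that `C(a,b) ≤ C(a) + K(b|a) + O(1)`; in fact,
for some constant `c₀` there are infinitely many pairs `(x,y)` with
`C(x,y) ≥ C(x) + K(y|x) + log₂ n − 2·log₂ log₂ n − c₀`, where `n = |x| + |y|`. -/
theorem no_mixed_additivity (U V : Machine) (hU : IsOptimal U) (hV : IsPrefixOptimal V) :
    (∀ c : ℕ, ∃ a b : BinStr,
        cplx0 U (enc a) + cplx V (enc b) (enc a) + c <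
          cplx0 U (Nat.pair (enc a) (enc b))) ∧
    (∃ c₀ : ℕ, {xy : BinStr × BinStr |
        (cplx0 U (enc xy.1) : ℤ) + (cplx V (enc xy.2) (enc xy.1) : ℤ)
            + (Nat.log 2 (xy.1.length + xy.2.length) : ℤ)
            - 2 * (Nat.log 2 (Nat.log 2 (xy.1.length + xy.2.length)) : ℤ) - (c₀ : ℤ)
          ≤ (cplx0 U (Nat.pair (enc xy.1) (enc xy.2)) : ℤ)}.Infinite) := by
  obtain ⟨c₀, hgap⟩ := exists_cplx_pair_gap hU hV
  choose a b hlen hineq using hgap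
  refine ⟨fun c => ⟨a (c + c₀ + 1), b (c + c₀ + 1), by have := hineq (c + c₀ + 1); omega⟩,
    c₀ + 1, ?_⟩
  refine Set.Infinite.of_image (fun xy => xy.1.length + xy.2.length)
    (Set.infinite_of_forall_exists_gt fun k => ⟨2 ^ (k + 1), ⟨(a k, b k), ?_, hlen k⟩, ?_⟩)
  · have hlog : Nat.log 2 ((a k).length + (b k).length) = k + 1 := by
      rw [hlen, Nat.log_pow one_lt_two]
    have := hineq k
    simp only [Set.mem_ofPred_eq, hlog]
    push_cast
    omega
  · exact Nat.lt_of_succ_lt Nat.lt_two_pow_self
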